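/- Let (S_i)_{i=1}^k be a partition of {1,…,d}, let x₀ ∈ ℝ^d have support T with σ = |T|/d, ρ_i = |S_i|/d, α_i = |T ∩ S_i|/|S_i|, let ω ∈ ℝ_+^k have strictly positive entries, set w = Σ_{i=1}^k ω_i 1_{S_i}, and let g be a standard Gaussian random vector in ℝ^d. Then for every τ > 0, E[ d^{-1} dist²(g, τ·∂‖·‖_{1,w}(x₀)) ] = σ + Σ_{i=1}^k ρ_i ( α_i (ω_i τ)² + (1 − α_i) φ(ω_i τ) ), where φ(t) = √(2/π) ∫_t^∞ (x−t)² exp(−x²/2) dx. -/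

import Mathlib

open MeasureTheory ProbabilityTheory
open scoped Pointwise BigOperators

noncomputable section

/-- `phi t = sqrt(2/pi) * int_t^infty (x-t)^2 exp(-x^2/2) dx`. -/
def phi (t : ℝ) : ℝ :=
  Real.sqrt (2 / Real.pi) * ∫ x in Set.Ioi t, (x - t) ^ 2 * Real.exp (-x ^ 2 / 2)

/-- The weighted ℓ1-norm `‖x‖_{1,w} = ∑ i, w i * |x i|`. -/
def wnorm {d : ℕ} (w : Fin d → ℝ) (x : EuclideanSpace ℝ (Fin d)) : ℝ :=
  ∑ j, w j * |x j|

/-- The subdifferential of a convex function `f` at `x₀`: the set of `p` with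
`f (x₀ + v) ≥ f x₀ + ⟨p, v⟩` for all `v`. -/
def subdiff {d : ℕ} (f : EuclideanSpace ℝ (Fin d) → ℝ) (x₀ : EuclideanSpace ℝ (Fin d)) :
    Set (EuclideanSpace ℝ (Fin d)) :=
  {p | ∀ v, f x₀ + @inner ℝ _ _ p v ≤ f (x₀ + v)}

/-- The standard Gaussian measure on `EuclideanSpace ℝ (Fin d)`:
independent standard Gaussian coordinates. -/
def stdGaussianE (d : ℕ) : Measure (EuclideanSpace ℝ (Fin d)) :=
  (Measure.pi fun _ : Fin d => gaussianReal 0 1).map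
    (MeasurableEquiv.toLp 2 (Fin d → ℝ))

/-! The subdifferential of the weighted ℓ1-norm at `x₀` is a product of one-dimensional sets: the
point `w j * sign (x₀ j)` on the support of `x₀` and the interval `[-w j, w j]` off it. The squared
distance to a product of closed sets splits into a sum of squared coordinate distances, so by
linearity the expectation is a sum of one-dimensional Gaussian integrals: `E (g - a)² = 1 + a²`
with `a² = (τ w j)²` on the support, and `E (|g| - τ w j)₊² = phi (τ w j)` off it. Grouping the
coordinates by the blocks `S i`, on which `w` is constant, gives the formula. -/

open Real Metric Set Function

def absSubdiff (c t : ℝ) : Set ℝ := if t = 0 then Icc (-c) c else {c * Real.sign t}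

lemma mem_absSubdiff_iff {c t s : ℝ} (hc : 0 ≤ c) :
    s ∈ absSubdiff c t ↔ ∀ v, c * |t| + s * v ≤ c * |t + v| := by
  unfold absSubdiff
  split_ifs with ht
  · subst ht
    simp only [abs_zero, mul_zero, zero_add, mem_Icc]
    constructor
    · rintro ⟨hlo, hhi⟩ v
      calc s * v ≤ |s| * |v| := by rw [← abs_mul]; exact le_abs_self _
        _ ≤ c * |v| := mul_le_mul_of_nonneg_right (abs_le.2 ⟨hlo, hhi⟩) (abs_nonneg v)
    · intro h
      have h1 := h 1
      have h2 := h (-1)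
      norm_num at h1 h2
      constructor <;> linarith
  · rw [mem_singleton_iff]
    rcases lt_or_gt_of_ne ht with hneg | hpos
    · rw [Real.sign_of_neg hneg, abs_of_neg hneg]
      constructor
      · rintro rfl v
        nlinarith [neg_abs_le (t + v)]
      · intro h
        have h1 := h (-t)
        have h2 := h t
        rw [add_neg_cancel, abs_zero] at h1
        rw [abs_of_neg (by linarith : t + t < 0)] at h2
        nlinarith
    · rw [Real.sign_of_pos hpos, abs_of_pos hpos]
      constructor
      · rintro rfl v
        nlinarith [le_abs_self (t + v)]
      · intro h
        have h1 := h (-t)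
        have h2 := h t
        rw [add_neg_cancel, abs_zero] at h1
        rw [abs_of_pos (by linarith : 0 < t + t)] at h2
        nlinarith

lemma isClosed_absSubdiff (c t : ℝ) : IsClosed (absSubdiff c t) := by
  unfold absSubdiff
  split_ifs
  exacts [isClosed_Icc, isClosed_singleton]

lemma absSubdiff_nonempty {c : ℝ} (hc : 0 ≤ c) (t : ℝ) : (absSubdiff c t).Nonempty := by
  unfold absSubdiff
  split_ifs
  exacts [nonempty_Icc.2 (by linarith), singleton_nonempty _]

lemma smul_absSubdiff {τ : ℝ} (hτ : 0 < τ) (c t : ℝ) :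
    τ • absSubdiff c t = absSubdiff (τ * c) t := by
  unfold absSubdiff
  split_ifs
  · rw [LinearOrderedField.smul_Icc hτ, mul_neg]
  · rw [smul_set_singleton, smul_eq_mul, mul_assoc]

lemma infDist_Icc_neg_self {b : ℝ} (hb : 0 ≤ b) (s : ℝ) :
    infDist s (Icc (-b) b) = max (|s| - b) 0 := by
  refine le_antisymm ?_ ((le_infDist (nonempty_Icc.2 (by linarith))).2 fun y hy => ?_)
  · rcases lt_or_ge b s with hbs | hsb
    · have hb' : b ∈ Icc (-b) b := ⟨by linarith, le_rfl⟩
      calc infDist s (Icc (-b) b) ≤ dist s b := infDist_le_dist_of_mem hb'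
        _ = max (|s| - b) 0 := by
          rw [Real.dist_eq, abs_of_pos (by linarith), abs_of_pos (by linarith),
            max_eq_left (by linarith)]
    rcases lt_or_ge s (-b) with hsb' | hbs'
    · have hb' : -b ∈ Icc (-b) b := ⟨le_rfl, by linarith⟩
      calc infDist s (Icc (-b) b) ≤ dist s (-b) := infDist_le_dist_of_mem hb'
        _ = max (|s| - b) 0 := by
          rw [Real.dist_eq, abs_of_neg (by linarith), abs_of_neg (by linarith),
            max_eq_left (by linarith)]
          ring
    · have hs : s ∈ Icc (-b) b := ⟨hbs', hsb⟩
      rw [infDist_zero_of_mem hs]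
      exact le_max_right _ _
  · rw [Real.dist_eq]
    refine max_le ?_ (abs_nonneg _)
    linarith [abs_sub_abs_le_abs_sub s y, abs_le.2 hy]

lemma infDist_absSubdiff_sq {c : ℝ} (hc : 0 ≤ c) (t s : ℝ) :
    infDist s (absSubdiff c t) ^ 2
      = if t = 0 then max (|s| - c) 0 ^ 2 else (s - c * Real.sign t) ^ 2 := by
  unfold absSubdiff
  split_ifs
  · rw [infDist_Icc_neg_self hc]
  · rw [infDist_singleton, Real.dist_eq, sq_abs]

lemma mem_subdiff_sum_iff {d : ℕ} (f : Fin d → ℝ → ℝ) (x₀ p : EuclideanSpace ℝ (Fin d)) :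
    p ∈ subdiff (fun x => ∑ j, f j (x j)) x₀ ↔
      ∀ j v, f j (x₀ j) + p j * v ≤ f j (x₀ j + v) := by
  constructor
  · intro hp j v
    have h := hp (EuclideanSpace.single j v)
    have hrest : ∑ i ∈ Finset.univ.erase j, f i ((x₀ + EuclideanSpace.single j v) i)
        = ∑ i ∈ Finset.univ.erase j, f i (x₀ i) :=
      Finset.sum_congr rfl fun i hi => by simp [Finset.ne_of_mem_erase hi]
    beta_reduce at h
    rw [EuclideanSpace.inner_single_right, ← Finset.add_sum_erase _ _ (Finset.mem_univ j),
      ← Finset.add_sum_erase _ _ (Finset.mem_univ j), hrest] at h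
    simp only [PiLp.add_apply, PiLp.single_apply, if_true, conj_trivial] at h
    linarith
  · intro hp v
    have hinner : inner ℝ p v = ∑ j, p j * v j := by
      simp [PiLp.inner_apply, mul_comm]
    rw [hinner, ← Finset.sum_add_distrib]
    exact Finset.sum_le_sum fun j _ => hp j (v j)

lemma subdiff_wnorm {d : ℕ} {w : Fin d → ℝ} (hw : ∀ j, 0 ≤ w j)
    (x₀ : EuclideanSpace ℝ (Fin d)) :
    subdiff (wnorm w) x₀ = {p | ∀ j, p j ∈ absSubdiff (w j) (x₀ j)} := by
  ext p
  exact (mem_subdiff_sum_iff (fun j t => w j * |t|) x₀ p).trans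
    (forall_congr' fun j => (mem_absSubdiff_iff (hw j)).symm)

lemma smul_setOf_forall_mem {ι : Type*} {τ : ℝ} (hτ : τ ≠ 0) (K : ι → Set ℝ) :
    τ • {p : EuclideanSpace ℝ ι | ∀ j, p j ∈ K j} = {p | ∀ j, p j ∈ τ • K j} := by
  ext p
  simp only [mem_smul_set_iff_inv_smul_mem₀ hτ, mem_ofPred_eq, PiLp.smul_apply]

lemma infDist_sq_setOf_forall_mem {ι : Type*} [Fintype ι] {K : ι → Set ℝ}
    (hclosed : ∀ j, IsClosed (K j)) (hne : ∀ j, (K j).Nonempty) (g : EuclideanSpace ℝ ι) :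
    infDist g {p : EuclideanSpace ℝ ι | ∀ j, p j ∈ K j} ^ 2 = ∑ j, infDist (g j) (K j) ^ 2 := by
  choose q hqK hq using fun j => (hclosed j).exists_infDist_eq_dist (hne j) (g j)
  have hqP : WithLp.toLp 2 q ∈ {p : EuclideanSpace ℝ ι | ∀ j, p j ∈ K j} := hqK
  suffices infDist g {p : EuclideanSpace ℝ ι | ∀ j, p j ∈ K j}
      = √(∑ j, infDist (g j) (K j) ^ 2) by
    rw [this, sq_sqrt (by positivity)]
  refine le_antisymm ?_ ((le_infDist ⟨_, hqP⟩).2 fun p hp => ?_)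
  · calc _ ≤ dist g (WithLp.toLp 2 q) := infDist_le_dist_of_mem hqP
      _ = _ := by simp only [EuclideanSpace.dist_eq, hq]
  · rw [EuclideanSpace.dist_eq]
    exact sqrt_le_sqrt (Finset.sum_le_sum fun j _ =>
      pow_le_pow_left₀ infDist_nonneg (infDist_le_dist_of_mem (hp j)) 2)

lemma integral_sub_sq_gaussianReal (μ : ℝ) (v : NNReal) (a : ℝ) :
    ∫ x, (x - a) ^ 2 ∂gaussianReal μ v = v + (μ - a) ^ 2 := by
  -- `Var = E[X²] - E[X]²` for `N(μ - a, v)`, the law of `x - a` under `N(μ, v)`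
  have hvar := variance_eq_sub (memLp_id_gaussianReal (μ := μ - a) (v := v) 2)
  simp only [Pi.pow_apply, id_eq] at hvar
  rw [variance_id_gaussianReal, integral_id_gaussianReal, ← gaussianReal_map_sub_const a,
    integral_map (by fun_prop) (by fun_prop)] at hvar
  linarith

lemma integrable_infDist_sq_gaussianReal (μ : ℝ) (v : NNReal) (K : Set ℝ) :
    Integrable (fun x => infDist x K ^ 2) (gaussianReal μ v) := by
  have hsq : Integrable (fun x : ℝ => 2 * x ^ 2 + 2 * infDist 0 K ^ 2) (gaussianReal μ v) :=
    ((memLp_id_gaussianReal 2).integrable_sq.const_mul 2).add (integrable_const _)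
  refine hsq.mono' ((continuous_infDist_pt K).pow 2).aestronglyMeasurable
    (Filter.Eventually.of_forall fun x => ?_)
  have h := infDist_le_infDist_add_dist (x := x) (y := 0) (s := K)
  rw [Real.dist_0_eq_abs] at h
  rw [Real.norm_of_nonneg (by positivity)]
  nlinarith [infDist_nonneg (x := x) (s := K), abs_nonneg x, sq_abs x,
    sq_nonneg (infDist 0 K - |x|)]

lemma two_mul_inv_sqrt_two_mul_pi : 2 * (√(2 * π))⁻¹ = √(2 / π) := by
  have h2 := Real.sq_sqrt (show (0:ℝ) ≤ 2 by norm_num)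
  rw [Real.sqrt_mul (by norm_num), Real.sqrt_div (by norm_num)]
  field_simp
  linarith

lemma integral_max_abs_sub_sq_gaussianReal {c : ℝ} (hc : 0 ≤ c) :
    ∫ x, max (|x| - c) 0 ^ 2 ∂gaussianReal 0 1 = phi c := by
  -- the integrand is even and vanishes on `[-c, c]`: it is twice the integral over `(c, ∞)`
  set F : ℝ → ℝ := fun y => gaussianPDFReal 0 1 y * max (y - c) 0 ^ 2
  have heven : ∀ x, gaussianPDFReal 0 1 x • max (|x| - c) 0 ^ 2 = F |x| := fun x => by
    simp [F, gaussianPDFReal]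
  have hvanish : ∀ y ∈ Ioi 0 \ Ioi c, F y = 0 := fun y hy => by
    simp only [mem_sdiff, mem_Ioi, not_lt] at hy
    simp [F, max_eq_right (sub_nonpos.2 hy.2)]
  have htail : EqOn F (fun y => (√(2 * π))⁻¹ * ((y - c) ^ 2 * rexp (-y ^ 2 / 2))) (Ioi c) :=
    fun y hy => by
      simp only [F, gaussianPDFReal, max_eq_left (sub_nonneg.2 (mem_Ioi.1 hy).le),
        NNReal.coe_one, mul_one, sub_zero]
      ring
  rw [integral_gaussianReal_eq_integral_smul one_ne_zero, funext heven, integral_comp_abs,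
    setIntegral_eq_of_subset_of_forall_sdiff_eq_zero measurableSet_Ioi (Ioi_subset_Ioi hc)
      hvanish,
    setIntegral_congr_fun measurableSet_Ioi htail, integral_const_mul, ← mul_assoc,
    two_mul_inv_sqrt_two_mul_pi, phi]

lemma integral_infDist_absSubdiff_sq_gaussianReal {c : ℝ} (hc : 0 ≤ c) (t : ℝ) :
    ∫ s, infDist s (absSubdiff c t) ^ 2 ∂gaussianReal 0 1
      = if t = 0 then phi c else 1 + c ^ 2 := by
  simp_rw [infDist_absSubdiff_sq hc]
  split_ifs with ht
  · exact integral_max_abs_sub_sq_gaussianReal hc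
  · rw [integral_sub_sq_gaussianReal]
    rcases Real.sign_apply_eq_of_ne_zero t ht with h | h <;>
    · rw [h]; push_cast; ring

lemma integral_stdGaussianE_sum {d : ℕ} {f : Fin d → ℝ → ℝ}
    (hf : ∀ j, Integrable (f j) (gaussianReal 0 1)) :
    ∫ g, ∑ j, f j (g j) ∂stdGaussianE d = ∑ j, ∫ s, f j s ∂gaussianReal 0 1 := by
  rw [stdGaussianE, integral_map_equiv]
  change ∫ x : Fin d → ℝ, ∑ j, f j (x j) ∂_ = _
  rw [integral_finsetSum _ fun j _ => integrable_comp_eval (hf j)]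
  exact Finset.sum_congr rfl fun j _ => integral_comp_eval (hf j).aestronglyMeasurable

lemma Finset.sum_univ_eq_sum_sum_of_cover {ι κ M : Type*} [Fintype ι] [Fintype κ]
    [DecidableEq ι] [AddCommMonoid M] {S : κ → Finset ι} (hdisj : Pairwise (Disjoint on S))
    (hcover : ∀ j, ∃ i, j ∈ S i) (f : ι → M) :
    ∑ j, f j = ∑ i, ∑ j ∈ S i, f j := by
  rw [← Finset.sum_biUnion (hdisj.set_pairwise _)]
  congr
  exact (Finset.eq_univ_of_forall fun j => by simpa using hcover j).symm

lemma Finset.sum_ite_mem_eq_card_mul {ι : Type*} [DecidableEq ι] (s T : Finset ι) (A B : ℝ) :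
    ∑ j ∈ s, (if j ∈ T then A else B)
      = s.card * ((T ∩ s).card / s.card * A + (1 - (T ∩ s).card / s.card) * B) := by
  rw [Finset.sum_ite, Finset.sum_const, Finset.sum_const, Finset.filter_mem_eq_inter,
    ← Finset.sdiff_eq_filter, nsmul_eq_mul, nsmul_eq_mul]
  rcases s.eq_empty_or_nonempty with rfl | hs
  · simp
  have hcard : ((s \ T).card : ℝ) = s.card - (T ∩ s).card := by
    rw [Finset.inter_comm]
    have := Finset.card_sdiff_add_card_inter s T
    rw [eq_sub_iff_add_eq]; exact_mod_cast this
  have hs' : (s.card : ℝ) ≠ 0 := by exact_mod_cast hs.card_pos.ne'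
  rw [hcard, Finset.inter_comm]
  field_simp

lemma Finset.sum_ite_mem_eq_of_mem {ι κ M : Type*} [DecidableEq ι] [Fintype κ] [AddCommMonoid M]
    {S : κ → Finset ι} (hdisj : Pairwise (Disjoint on S)) (ω : κ → M) {i : κ} {j : ι}
    (hj : j ∈ S i) :
    ∑ i', (if j ∈ S i' then ω i' else 0) = ω i := by
  rw [Finset.sum_eq_single i (fun i' _ hi' => if_neg fun hj' =>
    Finset.disjoint_left.1 (hdisj hi') hj' hj) (by simp), if_pos hj]

lemma infDist_smul_subdiff_wnorm_sq {d : ℕ} {w : Fin d → ℝ} (hw : ∀ j, 0 ≤ w j) {τ : ℝ}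
    (hτ : 0 < τ) (x₀ g : EuclideanSpace ℝ (Fin d)) :
    infDist g (τ • subdiff (wnorm w) x₀) ^ 2
      = ∑ j, infDist (g j) (absSubdiff (τ * w j) (x₀ j)) ^ 2 := by
  rw [subdiff_wnorm hw, smul_setOf_forall_mem hτ.ne']
  simp_rw [smul_absSubdiff hτ]
  exact infDist_sq_setOf_forall_mem (fun j => isClosed_absSubdiff _ _)
    (fun j => absSubdiff_nonempty (mul_nonneg hτ.le (hw j)) _) g

lemma integral_infDist_smul_subdiff_wnorm_sq {d : ℕ} {w : Fin d → ℝ} (hw : ∀ j, 0 ≤ w j)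
    {τ : ℝ} (hτ : 0 < τ) (x₀ : EuclideanSpace ℝ (Fin d)) :
    ∫ g, infDist g (τ • subdiff (wnorm w) x₀) ^ 2 ∂stdGaussianE d
      = ∑ j, if x₀ j = 0 then phi (τ * w j) else 1 + (τ * w j) ^ 2 := by
  simp_rw [infDist_smul_subdiff_wnorm_sq hw hτ]
  rw [integral_stdGaussianE_sum fun j => integrable_infDist_sq_gaussianReal 0 1 _]
  exact Finset.sum_congr rfl fun j _ =>
    integral_infDist_absSubdiff_sq_gaussianReal (mul_nonneg hτ.le (hw j)) _

theorem expected_sq_dist_to_dilated_subdifferential_general {d k : ℕ}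
    (S : Fin k → Finset (Fin d))
    (hdisj : ∀ i₁ i₂, i₁ ≠ i₂ → Disjoint (S i₁) (S i₂))
    (hcover : ∀ j, ∃ i, j ∈ S i)
    (x₀ : EuclideanSpace ℝ (Fin d))
    (T : Finset (Fin d)) (hT : T = Finset.univ.filter fun j => x₀ j ≠ 0)
    (ω : Fin k → ℝ) (hω : ∀ i, 0 < ω i)
    (w : Fin d → ℝ) (hwdef : ∀ j, w j = ∑ i, if j ∈ S i then ω i else 0)
    (τ : ℝ) (hτ : 0 < τ) :
    ∫ g, (d : ℝ)⁻¹ * Metric.infDist g (τ • subdiff (wnorm w) x₀) ^ 2 ∂(stdGaussianE d)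
      = (T.card : ℝ) / d
        + ∑ i, ((S i).card : ℝ) / d *
            (((T ∩ S i).card : ℝ) / (S i).card * (ω i * τ) ^ 2
              + (1 - ((T ∩ S i).card : ℝ) / (S i).card) * phi (ω i * τ)) := by
  have hwS : ∀ i, ∀ j ∈ S i, w j = ω i := fun i j hj =>
    (hwdef j).trans (Finset.sum_ite_mem_eq_of_mem (fun i₁ i₂ => hdisj i₁ i₂) ω hj)
  have hw : ∀ j, 0 ≤ w j := fun j => by
    obtain ⟨i, hj⟩ := hcover j
    exact hwS i j hj ▸ (hω i).le
  have hcoord : ∀ j, (if x₀ j = 0 then phi (τ * w j) else 1 + (τ * w j) ^ 2)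
      = (if j ∈ T then 1 else 0) + (if j ∈ T then (w j * τ) ^ 2 else phi (w j * τ)) :=
        fun j => by
    by_cases h : x₀ j = 0 <;> simp [hT, h, mul_comm]
  have hblock : ∀ i, ∑ j ∈ S i, (if j ∈ T then (w j * τ) ^ 2 else phi (w j * τ))
      = (S i).card * (((T ∩ S i).card : ℝ) / (S i).card * (ω i * τ) ^ 2
          + (1 - ((T ∩ S i).card : ℝ) / (S i).card) * phi (ω i * τ)) := fun i => by
    rw [← Finset.sum_ite_mem_eq_card_mul]
    exact Finset.sum_congr rfl fun j hj => by rw [hwS i j hj]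
  rw [integral_const_mul, integral_infDist_smul_subdiff_wnorm_sq hw hτ]
  simp_rw [hcoord]
  rw [Finset.sum_add_distrib, Finset.sum_boole,
    Finset.sum_univ_eq_sum_sum_of_cover (fun i₁ i₂ => hdisj i₁ i₂) hcover]
  simp_rw [hblock]
  rw [mul_add, Finset.mul_sum]
  simp [div_eq_inv_mul, mul_assoc]

theorem expected_sq_dist_to_dilated_subdifferential {d k : ℕ} (hd : 0 < d)
    (S : Fin k → Finset (Fin d))
    (hdisj : ∀ i₁ i₂, i₁ ≠ i₂ → Disjoint (S i₁) (S i₂))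
    (hcover : ∀ j, ∃ i, j ∈ S i)
    (x₀ : EuclideanSpace ℝ (Fin d)) (hx₀ : x₀ ≠ 0)
    (T : Finset (Fin d)) (hT : T = Finset.univ.filter fun j => x₀ j ≠ 0)
    (ω : Fin k → ℝ) (hω : ∀ i, 0 < ω i)
    (w : Fin d → ℝ) (hwdef : ∀ j, w j = ∑ i, if j ∈ S i then ω i else 0)
    (τ : ℝ) (hτ : 0 < τ) :
    ∫ g, (d : ℝ)⁻¹ * Metric.infDist g (τ • subdiff (wnorm w) x₀) ^ 2 ∂(stdGaussianE d)
      = (T.card : ℝ) / d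
        + ∑ i, ((S i).card : ℝ) / d *
            (((T ∩ S i).card : ℝ) / (S i).card * (ω i * τ) ^ 2
              + (1 - ((T ∩ S i).card : ℝ) / (S i).card) * phi (ω i * τ)) :=
  expected_sq_dist_to_dilated_subdifferential_general S hdisj hcover x₀ T hT ω hω w hwdef τ hτ
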